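/- arXiv:2310.11537 — 2 statements merged into one kernel-verified Lean document; each statement's English description precedes it below -/
import Mathlib

section
/- Let G be a finite group and ω: G³ → 𝕋 a 3-cocycle. On the commutative C*-algebra C(G) of complex functions on G, define α_g(f)(k) = f(g⁻¹k) (left translation) and define unitaries u(g,h) ∈ C(G) by u(g,h)(k) = ω(k⁻¹, g, h). Then (α, u) is an anomalous action of G on C(G) with anomaly ω: namely α_g α_h = Ad(u(g,h)) α_{gh} (which holds since C(G) is commutative and α is a genuine action), and α_g(u(h,k)) · u(g,hk) · u(gh,k)* · u(g,h)* = ω(g,h,k) · 1 for all g,h,k ∈ G. -/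
/-- on `C(G) = (G → ℂ)`, left translation `α_g(f)(k) = f(g⁻¹k)` together
with the unitaries `u(g,h)(k) = ω(k⁻¹,g,h)` forms an anomalous action with anomaly
the 3-cocycle `ω`: the relation `α_g α_h = Ad(u(g,h)) α_{gh}` holds (automatically,
`C(G)` being commutative and `α` a genuine action), and
`α_g(u(h,k)) u(g,hk) u(gh,k)* u(g,h)* = ω(g,h,k)·1` pointwise. -/
theorem stmt6 {G : Type*} [Group G] [Fintype G] (ω : G → G → G → ℂ)
    (hnorm : ∀ g h k, ‖ω g h k‖ = 1)
    (hcoc : ∀ g h k l,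
      ω h k l * ω g (h * k) l * ω g h k = ω (g * h) k l * ω g h (k * l)) :
    (∀ (g h : G) (f : G → ℂ) (x : G),
      f (h⁻¹ * (g⁻¹ * x)) = f ((g * h)⁻¹ * x)) ∧
    (∀ g h k x : G,
      ω (g⁻¹ * x)⁻¹ h k * ω x⁻¹ g (h * k) *
        (starRingEnd ℂ) (ω x⁻¹ (g * h) k) * (starRingEnd ℂ) (ω x⁻¹ g h) = ω g h k) := by
  constructor
  · intro g h f x
    rw [mul_inv_rev, mul_assoc]
  · intro g h k x
    have hc : ∀ a b c : G, (starRingEnd ℂ) (ω a b c) * ω a b c = 1 := by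
      intro a b c
      rw [mul_comm, Complex.mul_conj', hnorm]
      norm_num
    have key := hcoc x⁻¹ g h k
    have hrw : (g⁻¹ * x)⁻¹ = x⁻¹ * g := by group
    rw [hrw]
    calc ω (x⁻¹ * g) h k * ω x⁻¹ g (h * k) *
          (starRingEnd ℂ) (ω x⁻¹ (g * h) k) * (starRingEnd ℂ) (ω x⁻¹ g h)
        = (ω g h k * ω x⁻¹ (g * h) k * ω x⁻¹ g h) *
          (starRingEnd ℂ) (ω x⁻¹ (g * h) k) * (starRingEnd ℂ) (ω x⁻¹ g h) := by
          rw [key]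
      _ = ω g h k * ((starRingEnd ℂ) (ω x⁻¹ (g * h) k) * ω x⁻¹ (g * h) k) *
          ((starRingEnd ℂ) (ω x⁻¹ g h) * ω x⁻¹ g h) := by ring
      _ = ω g h k := by rw [hc, hc]; ring
end

section
/- Let G be a finite group and ω ∈ Z³(G,𝕋) a normalized 3-cocycle (ω(g,h,k) = 1 whenever any of g,h,k equals the identity). Define on A₂ = C(G) ⊗ B(ℓ²(G)) the maps θ₂(g) = d₂(g) ∘ θ'₂(g), where θ'₂(g) = λ_g ⊗ Ad(λ_G(g)) and d₂(g)(δ_k ⊗ e_{x,y}) = ω(x⁻¹,g,g⁻¹k)·conj(ω(y⁻¹,g,g⁻¹k))·(δ_k ⊗ e_{x,y}); and define unitaries u₂(g,h) = φ₁(u₁(g,h)) ∈ A₂ where u₁(g,h)(k) = ω(k⁻¹,g,h) and φ₁(f) = 1 ⊗ M_f. Then for all g, h ∈ G: θ₂(g) ∘ θ₂(h) = Ad(u₂(g,h)) ∘ θ₂(gh). -/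
section
/- We model `A₂ = C(G) ⊗ B(ℓ²(G))` as functions `G → Matrix G G ℂ`, with basis
`δ_k ⊗ e_{x,y}` corresponding to the function supported at `k` with value the
matrix unit `e_{x,y}`. -/

variable {G : Type*} [Group G] [Fintype G] [DecidableEq G]

/-- The translation action `θ'₂(g) = λ_g ⊗ Ad(λ_G(g))`. -/
def theta2' (g : G) (F : G → Matrix G G ℂ) : G → Matrix G G ℂ :=
  fun k => Matrix.of fun x y => F (g⁻¹ * k) (g⁻¹ * x) (g⁻¹ * y)

/-- The diagonal perturbation `d₂(g)`, multiplying `δ_k ⊗ e_{x,y}` by the phase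
`ω(x⁻¹,g,g⁻¹k) · conj(ω(y⁻¹,g,g⁻¹k))`. -/
noncomputable def d2pert (ω : G → G → G → ℂ) (g : G) (F : G → Matrix G G ℂ) :
    G → Matrix G G ℂ :=
  fun k => Matrix.of fun x y =>
    ω x⁻¹ g (g⁻¹ * k) * (starRingEnd ℂ) (ω y⁻¹ g (g⁻¹ * k)) * F k x y

/-- The perturbed maps `θ₂(g) = d₂(g) ∘ θ'₂(g)`. -/
noncomputable def theta2 (ω : G → G → G → ℂ) (g : G) (F : G → Matrix G G ℂ) :
    G → Matrix G G ℂ :=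
  d2pert ω g (theta2' g F)

/-- The unitaries `u₂(g,h) = φ₁(u₁(g,h)) = 1 ⊗ M_{u₁(g,h)}`, where
`u₁(g,h)(k) = ω(k⁻¹,g,h)`. -/
noncomputable def u2 (ω : G → G → G → ℂ) (g h : G) : G → Matrix G G ℂ :=
  fun _k => Matrix.of fun x y => if x = y then ω x⁻¹ g h else 0

open ComplexConjugate

theorem RCLike.mul_conj_eq_of_eq_mul_of_norm_eq_one {𝕜 : Type*} [RCLike 𝕜] {w a b a' b' : 𝕜}
    (hw : ‖w‖ = 1) (ha : a = w * b) (ha' : a' = w * b') : a * conj a' = b * conj b' := by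
  have hw' : w * conj w = 1 := by rw [RCLike.mul_conj, hw]; norm_num
  calc a * conj a' = w * conj w * (b * conj b') := by rw [ha, ha', map_mul]; ring
    _ = b * conj b' := by rw [hw', one_mul]

theorem u2_mul_mul_star_u2_apply (ω : G → G → G → ℂ) (g h : G) (F : G → Matrix G G ℂ)
    (k x y : G) :
    (u2 ω g h * F * star (u2 ω g h)) k x y = ω x⁻¹ g h * F k x y * conj (ω y⁻¹ g h) := by
  have hu : u2 ω g h k = Matrix.diagonal fun z => ω z⁻¹ g h := rfl
  simp only [Pi.mul_apply, Pi.star_apply, hu, Matrix.star_eq_conjTranspose,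
    Matrix.diagonal_conjTranspose, Matrix.diagonal_mul, Matrix.mul_diagonal, RCLike.star_def]

theorem stmt16_general (ω : G → G → G → ℂ)
    (hnorm : ∀ g h k, ‖ω g h k‖ = 1)
    (hcoc : ∀ g h k l,
      ω h k l * ω g (h * k) l * ω g h k = ω (g * h) k l * ω g h (k * l)) :
    ∀ (g h : G) (F : G → Matrix G G ℂ),
      theta2 ω g (theta2 ω h F) =
        u2 ω g h * theta2 ω (g * h) F * star (u2 ω g h) := by
  intro g h F
  funext k
  ext x y
  simp only [u2_mul_mul_star_u2_apply, theta2, d2pert, theta2', Matrix.of_apply, mul_inv_rev,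
    inv_inv, mul_assoc]
  set l := h⁻¹ * (g⁻¹ * k)
  have cocycle (z : G) :
      ω z⁻¹ g (g⁻¹ * k) * ω (z⁻¹ * g) h l = ω g h l * (ω z⁻¹ (g * h) l * ω z⁻¹ g h) := by
    have hk : g⁻¹ * k = h * l := by simp [l]
    rw [hk]
    linear_combination (hcoc z⁻¹ g h l).symm
  -- The factor `ω g h l` does not depend on the row `x` or column `y`, so it cancels
  -- against its conjugate.
  have phases := RCLike.mul_conj_eq_of_eq_mul_of_norm_eq_one (hnorm g h l) (cocycle x) (cocycle y)
  simp only [map_mul] at phases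
  linear_combination F l (h⁻¹ * (g⁻¹ * x)) (h⁻¹ * (g⁻¹ * y)) * phases

/-- for a normalized circle-valued 3-cocycle `ω`, the perturbed maps
`θ₂(g) = d₂(g) ∘ θ'₂(g)` on `A₂ = C(G) ⊗ B(ℓ²(G))` satisfy the cocycle-action
relation `θ₂(g) ∘ θ₂(h) = Ad(u₂(g,h)) ∘ θ₂(gh)`. -/
theorem stmt16 (ω : G → G → G → ℂ)
    (hnorm : ∀ g h k, ‖ω g h k‖ = 1)
    (hcoc : ∀ g h k l,
      ω h k l * ω g (h * k) l * ω g h k = ω (g * h) k l * ω g h (k * l))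
    (hnormalized : ∀ g h k, g = 1 ∨ h = 1 ∨ k = 1 → ω g h k = 1) :
    ∀ (g h : G) (F : G → Matrix G G ℂ),
      theta2 ω g (theta2 ω h F) =
        u2 ω g h * theta2 ω (g * h) F * star (u2 ω g h) :=
  stmt16_general ω hnorm hcoc

end
end
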